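/- arXiv:math/0703212 — 3 statements merged into one kernel-verified Lean document; each statement's English description precedes it below -/
import Mathlib

section
/- Let 0 < p < q be coprime integers and let n_j/m_j be the Hirzebruch-Jung continued-fraction approximants to p/q (so m_0 = 0, n_0 = -1, m_1 = 1, n_1 = 0, m_{j+1} = e_j m_j - m_{j-1}, n_{j+1} = e_j n_j - n_{j-1}, with (m_{k+1}, n_{k+1}) = (q, p)). Then for every j with 1 ≤ j ≤ k, p/q - n_j/m_j + 1/q - 1/m_j ≤ 0, with equality if and only if e_1 = e_2 = ... = e_k = 2. -/
/-! With `c j = (p + 1) * m j - q * n j` the quantity in question is `(c j - q) / (q * m j)`.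
The sequence `c` solves the same recurrence as `m` and `n`, so its second differences are
`(e j - 2) * c j`, and `c j > 0` since both `m j` and `p * m j - q * n j` are positive. Hence `c` is
convex with `c 0 = c (k + 1) = q`: it stays below `q`, and it reaches `q` at an interior point
only if it is affine, i.e. only if every `e i = 2`. -/

open Finset fwdDiff

section DiscreteConvexity

variable {G : Type*} [AddCommGroup G] {c : ℕ → G} {j N : ℕ}

theorem sum_range_sum_Ico_fwdDiff_sub (c : ℕ → G) (hjN : j ≤ N) :
    ∑ i ∈ range j, ∑ l ∈ Ico j N, (Δ_[1] c i - Δ_[1] c l) =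
      (N - j) • (c j - c 0) - j • (c N - c j) := by
  have hleft : ∑ i ∈ range j, Δ_[1] c i = c j - c 0 := sum_range_sub c j
  have hright : ∑ l ∈ Ico j N, Δ_[1] c l = c N - c j := sum_Ico_sub c hjN
  simp only [sum_sub_distrib, sum_const, ← smul_sum, hleft, hright, Nat.card_Ico, card_range,
    smul_sub]

theorem nsmul_sub_eq_sum_sum_fwdDiff_sub (hN : c N = c 0) (hjN : j ≤ N) :
    N • (c j - c 0) = ∑ i ∈ range j, ∑ l ∈ Ico j N, (Δ_[1] c i - Δ_[1] c l) := by
  rw [sum_range_sum_Ico_fwdDiff_sub c hjN, hN, ← neg_sub (c j), smul_neg, sub_neg_eq_add,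
    ← add_nsmul, Nat.sub_add_cancel hjN]

variable [LinearOrder G] [IsOrderedAddMonoid G]

theorem le_of_monotoneOn_fwdDiff (hΔ : MonotoneOn (Δ_[1] c) (Set.Iio N)) (hN : c N = c 0)
    (hjN : j ≤ N) : c j ≤ c 0 := by
  have hsum : N • (c j - c 0) ≤ N • 0 := by
    rw [nsmul_sub_eq_sum_sum_fwdDiff_sub hN hjN, smul_zero]
    refine sum_nonpos fun i hi => sum_nonpos fun l hl => sub_nonpos.2 ?_
    simp only [mem_range, mem_Ico] at hi hl
    exact hΔ (by simp; omega) (by simpa using hl.2) (by omega)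
  rcases Nat.eq_zero_or_pos N with rfl | hN0
  · rw [Nat.le_zero.1 hjN]
  · exact sub_nonpos.1 ((nsmul_le_nsmul_iff_right hN0.ne').1 hsum)

theorem eq_iff_of_monotoneOn_fwdDiff (hΔ : MonotoneOn (Δ_[1] c) (Set.Iio N)) (hN : c N = c 0)
    (hj : 0 < j) (hjN : j < N) : c j = c 0 ↔ Δ_[1] c 0 = Δ_[1] c (N - 1) := by
  have hmono : ∀ {i l}, i ≤ l → l < N → Δ_[1] c i ≤ Δ_[1] c l := fun hil hl =>
    hΔ (Set.mem_Iio.2 (hil.trans_lt hl)) (Set.mem_Iio.2 hl) hil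
  have hterm : ∀ i ∈ range j, ∀ l ∈ Ico j N, Δ_[1] c i - Δ_[1] c l ≤ 0 := by
    intro i hi l hl
    simp only [mem_range, mem_Ico] at hi hl
    exact sub_nonpos.2 (hmono (by omega) hl.2)
  rw [← sub_eq_zero, ← nsmul_eq_zero_iff_right (n := N) (by omega),
    nsmul_sub_eq_sum_sum_fwdDiff_sub hN hjN.le,
    sum_eq_zero_iff_of_nonpos fun i hi => sum_nonpos (hterm i hi)]
  constructor
  · intro h
    have hzero := (sum_eq_zero_iff_of_nonpos (hterm 0 (by simpa))).1 (h 0 (by simpa)) (N - 1)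
      (by simp only [mem_Ico]; omega)
    exact sub_eq_zero.1 hzero
  · intro h i hi
    refine sum_eq_zero fun l hl => sub_eq_zero.2 ?_
    simp only [mem_range, mem_Ico] at hi hl
    refine le_antisymm (hmono (by omega) hl.2) ?_
    calc Δ_[1] c l ≤ Δ_[1] c (N - 1) := hmono (by omega) (by omega)
      _ = Δ_[1] c 0 := h.symm
      _ ≤ Δ_[1] c i := hmono (Nat.zero_le i) (by omega)

end DiscreteConvexity

def HJRec {R : Type*} [CommRing R] (e : ℕ → R) (k : ℕ) (x : ℕ → R) : Prop :=
  ∀ j, 1 ≤ j → j ≤ k → x (j + 1) = e j * x j - x (j - 1)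

namespace HJRec

section CommRing

variable {R : Type*} [CommRing R] {e x y : ℕ → R} {k : ℕ}

theorem linear_comb (hx : HJRec e k x) (hy : HJRec e k y) (a b : R) :
    HJRec e k (fun j => a * x j + b * y j) := by
  intro j hj hjk
  simp only [hx j hj hjk, hy j hj hjk]
  ring

theorem reverse (hx : HJRec e k x) :
    HJRec (fun j => e (k + 1 - j)) k (fun j => x (k + 1 - j)) := by
  intro j hj hjk
  have h := hx (k + 1 - j) (by omega) (by omega)
  rw [show k + 1 - j + 1 = k + 1 - (j - 1) by omega, show k + 1 - j - 1 = k + 1 - (j + 1) by omega]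
    at h
  simp only
  rw [h]
  ring

theorem wronskian_eq (hx : HJRec e k x) (hy : HJRec e k y) :
    ∀ j ≤ k, x (j + 1) * y j - x j * y (j + 1) = x 1 * y 0 - x 0 * y 1 := by
  intro j hjk
  induction j with
  | zero => rfl
  | succ j ih =>
    rw [hx (j + 1) (by omega) hjk, hy (j + 1) (by omega) hjk, Nat.add_sub_cancel, ← ih (by omega)]
    ring

theorem fwdDiff_sub_fwdDiff (hx : HJRec e k x) {j : ℕ} (hj : 1 ≤ j) (hjk : j ≤ k) :
    Δ_[1] x j - Δ_[1] x (j - 1) = (e j - 2) * x j := by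
  simp only [fwdDiff, Nat.sub_add_cancel hj, hx j hj hjk]
  ring

end CommRing

section Ordered

variable {R : Type*} [CommRing R] [LinearOrder R] [IsStrictOrderedRing R] {e x : ℕ → R} {k : ℕ}

theorem pos (hx : HJRec e k x) (he : ∀ j, 1 ≤ j → j ≤ k → 2 ≤ e j) (h0 : 0 ≤ x 0)
    (h01 : x 0 < x 1) : ∀ j, 1 ≤ j → j ≤ k + 1 → 0 < x j := by
  have hstep : ∀ j ≤ k, 0 ≤ x j ∧ x j < x (j + 1) := by
    intro j hjk
    induction j with
    | zero => exact ⟨h0, h01⟩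
    | succ j ih =>
      obtain ⟨hj0, hj1⟩ := ih (by omega)
      have hrec := hx (j + 1) (by omega) hjk
      have hmul : 2 * x (j + 1) ≤ e (j + 1) * x (j + 1) :=
        mul_le_mul_of_nonneg_right (he (j + 1) (by omega) hjk) (by linarith)
      rw [Nat.add_sub_cancel] at hrec
      constructor <;> linarith
  intro j hj hjk
  obtain ⟨hj0, hj1⟩ := hstep (j - 1) (by omega)
  rw [Nat.sub_add_cancel hj] at hj1
  linarith

theorem monotoneOn_fwdDiff (hx : HJRec e k x) (he : ∀ j, 1 ≤ j → j ≤ k → 2 ≤ e j)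
    (hnonneg : ∀ j, 1 ≤ j → j ≤ k → 0 ≤ x j) : MonotoneOn (Δ_[1] x) (Set.Iio (k + 1)) := by
  refine monotoneOn_of_le_add_one Set.ordConnected_Iio fun j _ _ hj => ?_
  have h := hx.fwdDiff_sub_fwdDiff (j := j + 1) (by omega) (by simpa using hj)
  rw [Nat.add_sub_cancel] at h
  have := mul_nonneg (sub_nonneg.2 (he (j + 1) (by omega) (by simpa using hj)))
    (hnonneg (j + 1) (by omega) (by simpa using hj))
  linarith

theorem fwdDiff_zero_eq_iff (hx : HJRec e k x) (he : ∀ j, 1 ≤ j → j ≤ k → 2 ≤ e j)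
    (hpos : ∀ j, 1 ≤ j → j ≤ k → 0 < x j) :
    Δ_[1] x 0 = Δ_[1] x k ↔ ∀ j, 1 ≤ j → j ≤ k → e j = 2 := by
  constructor
  · intro h j hj hjk
    have hmono := hx.monotoneOn_fwdDiff he fun i hi hik => (hpos i hi hik).le
    have hle : Δ_[1] x j ≤ Δ_[1] x (j - 1) :=
      calc Δ_[1] x j ≤ Δ_[1] x k := hmono (by simp; omega) (by simp) hjk
        _ = Δ_[1] x 0 := h.symm
        _ ≤ Δ_[1] x (j - 1) := hmono (by simp) (by simp; omega) (Nat.zero_le _)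
    have hzero : (e j - 2) * x j = 0 :=
      le_antisymm (by linarith [hx.fwdDiff_sub_fwdDiff hj hjk])
        (mul_nonneg (sub_nonneg.2 (he j hj hjk)) (hpos j hj hjk).le)
    linarith [(mul_eq_zero.1 hzero).resolve_right (hpos j hj hjk).ne']
  · intro h
    suffices ∀ j ≤ k, Δ_[1] x j = Δ_[1] x 0 from (this k le_rfl).symm
    intro j hjk
    induction j with
    | zero => rfl
    | succ j ih =>
      have hd := hx.fwdDiff_sub_fwdDiff (j := j + 1) (by omega) hjk
      rw [h (j + 1) (by omega) hjk, sub_self, zero_mul, Nat.add_sub_cancel, sub_eq_zero] at hd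
      rw [hd, ih (by omega)]

theorem mul_sub_mul_pos {m n : ℕ → R} (hm : HJRec e k m) (hn : HJRec e k n)
    (he : ∀ j, 1 ≤ j → j ≤ k → 2 ≤ e j)
    (hm0 : m 0 = 0) (hn0 : n 0 = -1) (hm1 : m 1 = 1) (hn1 : n 1 = 0) :
    ∀ i, 1 ≤ i → i ≤ k → 0 < n (k + 1) * m i - m (k + 1) * n i := by
  -- This solution vanishes at `k + 1` and equals `1` at `k`, so read backwards it increases.
  have ha := hm.linear_comb hn (n (k + 1)) (-m (k + 1))
  have hdet := hm.wronskian_eq hn k le_rfl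
  rw [hm0, hn0, hm1, hn1] at hdet
  have hb_pos := ha.reverse.pos (fun j hj hjk => he (k + 1 - j) (by omega) (by omega))
    (by simp only [Nat.sub_zero]; linarith)
    (by simp only [Nat.sub_zero, Nat.add_sub_cancel]; linarith)
  intro i hi hik
  have h := hb_pos (k + 1 - i) (by omega) (by omega)
  rw [Nat.sub_sub_self (by omega)] at h
  linarith

end Ordered

end HJRec

theorem stmt_3_general (p q : ℕ) (k : ℕ) (m n e : ℕ → ℤ)
    (he : ∀ j, 1 ≤ j → j ≤ k → 2 ≤ e j)
    (hm0 : m 0 = 0) (hn0 : n 0 = -1) (hm1 : m 1 = 1) (hn1 : n 1 = 0)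
    (hmrec : ∀ j, 1 ≤ j → j ≤ k → m (j + 1) = e j * m j - m (j - 1))
    (hnrec : ∀ j, 1 ≤ j → j ≤ k → n (j + 1) = e j * n j - n (j - 1))
    (hmk : m (k + 1) = (q : ℤ)) (hnk : n (k + 1) = (p : ℤ)) :
    ∀ j, 1 ≤ j → j ≤ k →
      ((p : ℝ) / q - (n j : ℝ) / (m j : ℝ) + 1 / q - 1 / (m j : ℝ) ≤ 0 ∧
        ((p : ℝ) / q - (n j : ℝ) / (m j : ℝ) + 1 / q - 1 / (m j : ℝ) = 0 ↔
          ∀ i, 1 ≤ i → i ≤ k → e i = 2)) := by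
  intro j hj hjk
  have hm : HJRec e k m := hmrec
  have hn : HJRec e k n := hnrec
  have hm_pos := hm.pos he hm0.ge (by rw [hm0, hm1]; exact one_pos)
  have hdet_pos := hm.mul_sub_mul_pos hn he hm0 hn0 hm1 hn1
  rw [hmk, hnk] at hdet_pos
  set c : ℕ → ℤ := fun i => (p + 1) * m i + -q * n i with hc_def
  have hc : HJRec e k c := hm.linear_comb hn _ _
  have hc_pos : ∀ i, 1 ≤ i → i ≤ k → 0 < c i := fun i hi hik => by
    linarith [hm_pos i hi (by omega), hdet_pos i hi hik]
  have hc0 : c 0 = q := by simp [c, hm0, hn0]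
  have hck : c (k + 1) = c 0 := by simp only [c, hmk, hnk, hc0]; ring
  have hmono := hc.monotoneOn_fwdDiff he fun i hi hik => (hc_pos i hi hik).le
  have hle : c j ≤ c 0 := le_of_monotoneOn_fwdDiff hmono hck (by omega)
  have heq := eq_iff_of_monotoneOn_fwdDiff hmono hck hj (by omega)
  rw [Nat.add_sub_cancel, hc.fwdDiff_zero_eq_iff he hc_pos] at heq
  have hq : (0 : ℝ) < q := by exact_mod_cast hmk ▸ hm_pos (k + 1) (by omega) le_rfl
  have hmj : (0 : ℝ) < m j := by exact_mod_cast hm_pos j hj (by omega)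
  have hE : (p : ℝ) / q - (n j : ℝ) / (m j : ℝ) + 1 / q - 1 / (m j : ℝ) =
      ((c j : ℝ) - c 0) / (q * m j) := by
    rw [hc0, hc_def]
    push_cast
    field_simp
    ring
  rw [hE, div_le_iff₀ (by positivity), zero_mul, sub_nonpos, div_eq_zero_iff,
    or_iff_left (by positivity), sub_eq_zero, Int.cast_le, Int.cast_inj, heq]
  exact ⟨hle, Iff.rfl⟩

/-- Lemma 6.5.2: for the Hirzebruch-Jung approximants `n j / m j` of `p/q`
(with `(m (k+1), n (k+1)) = (q, p)`), for every `1 ≤ j ≤ k` one has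
`p/q - n j/m j + 1/q - 1/m j ≤ 0`, with equality iff `e 1 = ⋯ = e k = 2`. -/
theorem stmt_3 (p q : ℕ) (hp : 0 < p) (hpq : p < q) (hcop : Nat.Coprime p q)
    (k : ℕ) (hk : 1 ≤ k) (m n e : ℕ → ℤ)
    (he : ∀ j, 1 ≤ j → j ≤ k → 2 ≤ e j)
    (hm0 : m 0 = 0) (hn0 : n 0 = -1) (hm1 : m 1 = 1) (hn1 : n 1 = 0)
    (hmrec : ∀ j, 1 ≤ j → j ≤ k → m (j + 1) = e j * m j - m (j - 1))
    (hnrec : ∀ j, 1 ≤ j → j ≤ k → n (j + 1) = e j * n j - n (j - 1))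
    (hmk : m (k + 1) = (q : ℤ)) (hnk : n (k + 1) = (p : ℤ)) :
    ∀ j, 1 ≤ j → j ≤ k →
      ((p : ℝ) / q - (n j : ℝ) / (m j : ℝ) + 1 / q - 1 / (m j : ℝ) ≤ 0 ∧
        ((p : ℝ) / q - (n j : ℝ) / (m j : ℝ) + 1 / q - 1 / (m j : ℝ) = 0 ↔
          ∀ i, 1 ≤ i → i ≤ k → e i = 2)) :=
  stmt_3_general p q k m n e he hm0 hn0 hm1 hn1 hmrec hnrec hmk hnk
end

section
/- Let 0 < p < q be coprime, let n_j/m_j be the Hirzebruch-Jung approximants to p/q with (m_{k+1}, n_{k+1}) = (q, p), and let u_1, ..., u_k > 0 be arbitrary positive reals. Then μ := Σ_{j=1}^k (p/q - n_j/m_j + 1/q - 1/m_j) u_j ≤ 0, with μ = 0 if and only if p = q - 1. -/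
/-!
Put `ρ i = (n i + 1) / m i`. The coefficient of `u j` is `ρ (k + 1) - ρ j`, so it suffices that
`ρ` is nonincreasing on `1, …, k + 1`. For fixed `j` the numerator
`A i = m i * (n j + 1) - m j * (n i + 1)` of `ρ j - ρ i` satisfies
`A (i + 1) ≥ e i * A i - A (i - 1)`; with `e i ≥ 2` such a sequence is discretely convex once it
is nonnegative, and `A j = 0 ≤ A (j + 1)` by the determinant identity. The same convexity makes
`m i - n i` nondecreasing from `m 0 - n 0 = 1`, so `m (k + 1) - n (k + 1) = 1` forces `ρ ≡ 1`.
-/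

open Finset

section Recurrence

variable {R : Type*} [CommRing R]

def HJRecurrence (k : ℕ) (e x : ℕ → R) : Prop :=
  ∀ j, 1 ≤ j → j ≤ k → x (j + 1) = e j * x j - x (j - 1)

theorem monotoneOn_of_supersolution [LinearOrder R] [IsStrictOrderedRing R] {k a : ℕ}
    {e x : ℕ → R} (he : ∀ i, a < i → i ≤ k → 2 ≤ e i)
    (hx : ∀ i, a < i → i ≤ k → e i * x i - x (i - 1) ≤ x (i + 1))
    (h0 : 0 ≤ x a) (h1 : x a ≤ x (a + 1)) : MonotoneOn x (Set.Icc a (k + 1)) := by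
  have step : ∀ i, a ≤ i → i ≤ k → 0 ≤ x i ∧ x i ≤ x (i + 1) := by
    intro i hai hik
    induction i, hai using Nat.le_induction with
    | base => exact ⟨h0, h1⟩
    | succ i hai ih =>
      obtain ⟨hxi, hstep⟩ := ih (by omega)
      have hrec := hx (i + 1) (by omega) hik
      rw [Nat.add_sub_cancel] at hrec
      have hconv := mul_nonneg (sub_nonneg.2 (he (i + 1) (by omega) hik)) (hxi.trans hstep)
      exact ⟨hxi.trans hstep, by nlinarith⟩
  intro i ⟨hai, _⟩ j ⟨_, hjk⟩ hij
  induction j, hij using Nat.le_induction with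
  | base => exact le_rfl
  | succ j hij ih => exact (ih (by omega) (by omega)).trans (step j (hai.trans hij) (by omega)).2

variable {k : ℕ} {e m n : ℕ → R}

theorem HJRecurrence.supersolution [Preorder R] (hm : HJRecurrence k e m) {a : ℕ} :
    ∀ i, a < i → i ≤ k → e i * m i - m (i - 1) ≤ m (i + 1) :=
  fun i hai hik => (hm i (by omega) hik).ge

theorem HJRecurrence.sub (hm : HJRecurrence k e m) (hn : HJRecurrence k e n) :
    HJRecurrence k e (fun i => m i - n i) := by
  intro j hj hjk
  simp only [hm j hj hjk, hn j hj hjk]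
  ring

theorem HJRecurrence.wronskian_eq (hm : HJRecurrence k e m) (hn : HJRecurrence k e n) {i : ℕ}
    (hi : i ≤ k) : n (i + 1) * m i - m (i + 1) * n i = n 1 * m 0 - m 1 * n 0 := by
  induction i with
  | zero => rfl
  | succ i ih =>
    rw [hm (i + 1) (by omega) hi, hn (i + 1) (by omega) hi, Nat.add_sub_cancel, ← ih (by omega)]
    ring

end Recurrence

noncomputable def succRatio (m n : ℕ → ℤ) (i : ℕ) : ℝ :=
  ((n i : ℝ) + 1) / m i

structure IsHJApproximants (k : ℕ) (e m n : ℕ → ℤ) : Prop where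
  two_le : ∀ j, 1 ≤ j → j ≤ k → 2 ≤ e j
  m_zero : m 0 = 0
  n_zero : n 0 = -1
  m_one : m 1 = 1
  n_one : n 1 = 0
  m_rec : HJRecurrence k e m
  n_rec : HJRecurrence k e n

namespace IsHJApproximants

variable {k : ℕ} {e m n : ℕ → ℤ}

theorem det (h : IsHJApproximants k e m n) {i : ℕ} (hi : i ≤ k) :
    n (i + 1) * m i - m (i + 1) * n i = 1 := by
  rw [h.m_rec.wronskian_eq h.n_rec hi, h.m_zero, h.n_zero, h.m_one, h.n_one]
  rfl

theorem monotoneOn_sub_id (h : IsHJApproximants k e m n) :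
    MonotoneOn (fun i => m i - i) (Set.Icc 0 (k + 1)) := by
  refine monotoneOn_of_supersolution (e := e) (fun i hi hik => h.two_le i hi hik) ?_
    (by simp [h.m_zero]) (by simp [h.m_zero, h.m_one])
  intro i hi hik
  have he := h.two_le i hi hik
  simp only [h.m_rec i hi hik]
  push_cast [Nat.cast_sub (show 1 ≤ i by omega)]
  nlinarith

theorem add_one_le (h : IsHJApproximants k e m n) {i : ℕ} (hi : i ≤ k) :
    m i + 1 ≤ m (i + 1) := by
  have := h.monotoneOn_sub_id ⟨i.zero_le, by omega⟩ ⟨(i + 1).zero_le, by omega⟩ i.le_succ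
  push_cast at this
  linarith

theorem natCast_le_m (h : IsHJApproximants k e m n) {i : ℕ} (hi : i ≤ k + 1) :
    (i : ℤ) ≤ m i := by
  have := h.monotoneOn_sub_id ⟨le_rfl, by omega⟩ ⟨i.zero_le, hi⟩ i.zero_le
  simp only [h.m_zero, CharP.cast_eq_zero, sub_zero] at this
  linarith

theorem mul_succ_le_mul_succ (h : IsHJApproximants k e m n) {i j : ℕ} (hjk : j ≤ k)
    (hji : j ≤ i) (hik : i ≤ k + 1) : m j * (n i + 1) ≤ m i * (n j + 1) := by
  have hmj : 0 ≤ m j := le_trans (Int.natCast_nonneg j) (h.natCast_le_m (by omega))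
  have hmono : MonotoneOn (fun i => m i * (n j + 1) - m j * (n i + 1)) (Set.Icc j (k + 1)) := by
    refine monotoneOn_of_supersolution (e := e)
      (fun i hi hik => h.two_le i (by omega) hik) ?_ (by simp) ?_
    · intro i hi hik
      have he := h.two_le i (by omega) hik
      simp only [h.m_rec i (by omega) hik, h.n_rec i (by omega) hik]
      nlinarith
    · have := h.det hjk
      have := h.add_one_le hjk
      linarith
  have := hmono ⟨le_rfl, by omega⟩ ⟨hji, hik⟩ hji
  simp only [sub_self] at this
  linarith

theorem pos_m (h : IsHJApproximants k e m n) {i : ℕ} (hi : 1 ≤ i) (hik : i ≤ k + 1) : 0 < m i :=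
  (h.natCast_le_m hik).trans_lt' (by omega)

theorem succ_eq_of_succ_eq (h : IsHJApproximants k e m n) (hlast : n (k + 1) + 1 = m (k + 1))
    {j : ℕ} (hj : j ≤ k + 1) : n j + 1 = m j := by
  have hmono : MonotoneOn (fun i => m i - n i) (Set.Icc 0 (k + 1)) :=
    monotoneOn_of_supersolution (e := e) (fun i hi hik => h.two_le i hi hik)
      (h.m_rec.sub h.n_rec).supersolution (by simp [h.m_zero, h.n_zero])
      (by simp [h.m_zero, h.n_zero, h.m_one, h.n_one])
  have hlow := hmono ⟨le_rfl, by omega⟩ ⟨j.zero_le, hj⟩ j.zero_le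
  have hhigh := hmono ⟨j.zero_le, hj⟩ ⟨(k + 1).zero_le, le_rfl⟩ hj
  simp only [h.m_zero, h.n_zero] at hlow hhigh
  linarith

theorem succRatio_antitoneOn (h : IsHJApproximants k e m n) :
    AntitoneOn (succRatio m n) (Set.Icc 1 (k + 1)) := by
  intro j ⟨hj, _⟩ i ⟨_, hik⟩ hji
  rcases eq_or_lt_of_le hji with rfl | hlt
  · exact le_rfl
  have hmi : (0 : ℝ) < m i := by exact_mod_cast h.pos_m (by omega) hik
  have hmj : (0 : ℝ) < m j := by exact_mod_cast h.pos_m hj (by omega)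
  rw [succRatio, succRatio, div_le_div_iff₀ hmi hmj]
  have := h.mul_succ_le_mul_succ (by omega) hji hik
  exact_mod_cast (by linarith : (n i + 1) * m j ≤ (n j + 1) * m i)

theorem succRatio_eq_one (h : IsHJApproximants k e m n) (hlast : n (k + 1) + 1 = m (k + 1))
    {j : ℕ} (hj : 1 ≤ j) (hjk : j ≤ k + 1) : succRatio m n j = 1 := by
  have hmj : (m j : ℝ) ≠ 0 := by exact_mod_cast (h.pos_m hj hjk).ne'
  rw [succRatio, div_eq_one_iff_eq hmj]
  exact_mod_cast h.succ_eq_of_succ_eq hlast hjk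

end IsHJApproximants

theorem sum_mul_nonpos_and_eq_zero_iff {ι R : Type*} [CommRing R] [LinearOrder R]
    [IsStrictOrderedRing R] {s : Finset ι} {c u : ι → R} (hc : ∀ i ∈ s, c i ≤ 0)
    (hu : ∀ i ∈ s, 0 < u i) :
    ∑ i ∈ s, c i * u i ≤ 0 ∧ (∑ i ∈ s, c i * u i = 0 ↔ ∀ i ∈ s, c i = 0) := by
  have hterm : ∀ i ∈ s, c i * u i ≤ 0 := fun i hi =>
    mul_nonpos_of_nonpos_of_nonneg (hc i hi) (hu i hi).le
  refine ⟨sum_nonpos hterm, (sum_eq_zero_iff_of_nonpos hterm).trans ?_⟩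
  exact forall₂_congr fun i hi => mul_eq_zero_iff_right (hu i hi).ne'

theorem stmt_5_general (p q : ℕ) (hpq : p < q)
    (k : ℕ) (hk : 1 ≤ k) (m n e : ℕ → ℤ) (u : ℕ → ℝ)
    (he : ∀ j, 1 ≤ j → j ≤ k → 2 ≤ e j)
    (hm0 : m 0 = 0) (hn0 : n 0 = -1) (hm1 : m 1 = 1) (hn1 : n 1 = 0)
    (hmrec : ∀ j, 1 ≤ j → j ≤ k → m (j + 1) = e j * m j - m (j - 1))
    (hnrec : ∀ j, 1 ≤ j → j ≤ k → n (j + 1) = e j * n j - n (j - 1))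
    (hmk : m (k + 1) = (q : ℤ)) (hnk : n (k + 1) = (p : ℤ))
    (hu : ∀ j, 1 ≤ j → j ≤ k → 0 < u j) :
    (∑ j ∈ Icc 1 k,
        ((p : ℝ) / q - (n j : ℝ) / (m j : ℝ) + 1 / q - 1 / (m j : ℝ)) * u j ≤ 0) ∧
    ((∑ j ∈ Icc 1 k,
        ((p : ℝ) / q - (n j : ℝ) / (m j : ℝ) + 1 / q - 1 / (m j : ℝ)) * u j = 0)
      ↔ p = q - 1) := by
  have h : IsHJApproximants k e m n := ⟨he, hm0, hn0, hm1, hn1, hmrec, hnrec⟩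
  have hlast : succRatio m n (k + 1) = ((p : ℝ) + 1) / q := by
    simp only [succRatio, hmk, hnk, Int.cast_natCast]
  have hcoeff : ∀ j, (p : ℝ) / q - (n j : ℝ) / (m j : ℝ) + 1 / q - 1 / (m j : ℝ)
      = succRatio m n (k + 1) - succRatio m n j := by
    intro j
    rw [hlast, succRatio]
    ring
  have hnonpos : ∀ j ∈ Icc 1 k, succRatio m n (k + 1) - succRatio m n j ≤ 0 := by
    intro j hj
    obtain ⟨hj1, hjk⟩ := mem_Icc.1 hj
    exact sub_nonpos.2 <| h.succRatio_antitoneOn ⟨hj1, by omega⟩ ⟨by omega, le_rfl⟩ (by omega)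
  simp only [hcoeff]
  obtain ⟨hle, hzero⟩ :=
    sum_mul_nonpos_and_eq_zero_iff hnonpos fun j hj => hu j (mem_Icc.1 hj).1 (mem_Icc.1 hj).2
  refine ⟨hle, hzero.trans ⟨fun hall => ?_, fun hpq1 => ?_⟩⟩
  · have hq : (q : ℝ) ≠ 0 := Nat.cast_ne_zero.2 (by omega)
    have hone : succRatio m n 1 = 1 := by simp [succRatio, hm1, hn1]
    have := hall 1 (mem_Icc.2 ⟨le_rfl, hk⟩)
    rw [sub_eq_zero, hone, hlast, div_eq_one_iff_eq hq] at this
    have : p + 1 = q := by exact_mod_cast this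
    omega
  · have hqp : n (k + 1) + 1 = m (k + 1) := by rw [hmk, hnk]; omega
    intro j hj
    obtain ⟨hj1, hjk⟩ := mem_Icc.1 hj
    rw [h.succRatio_eq_one hqp hj1 (by omega), h.succRatio_eq_one hqp (by omega) le_rfl, sub_self]

/-- Theorem 6.5.1 (sign of the log-term/mass coefficient): for the
Hirzebruch-Jung approximants `n j / m j` of `p/q` and any positive reals
`u 1, …, u k`, the quantity
`μ = ∑_{j=1}^k (p/q - n j/m j + 1/q - 1/m j) * u j` is non-positive, and
`μ = 0` iff `p = q - 1`. -/
theorem stmt_5 (p q : ℕ) (hp : 0 < p) (hpq : p < q) (hcop : Nat.Coprime p q)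
    (k : ℕ) (hk : 1 ≤ k) (m n e : ℕ → ℤ) (u : ℕ → ℝ)
    (he : ∀ j, 1 ≤ j → j ≤ k → 2 ≤ e j)
    (hm0 : m 0 = 0) (hn0 : n 0 = -1) (hm1 : m 1 = 1) (hn1 : n 1 = 0)
    (hmrec : ∀ j, 1 ≤ j → j ≤ k → m (j + 1) = e j * m j - m (j - 1))
    (hnrec : ∀ j, 1 ≤ j → j ≤ k → n (j + 1) = e j * n j - n (j - 1))
    (hmk : m (k + 1) = (q : ℤ)) (hnk : n (k + 1) = (p : ℤ))
    (hu : ∀ j, 1 ≤ j → j ≤ k → 0 < u j) :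
    (∑ j ∈ Icc 1 k,
        ((p : ℝ) / q - (n j : ℝ) / (m j : ℝ) + 1 / q - 1 / (m j : ℝ)) * u j ≤ 0) ∧
    ((∑ j ∈ Icc 1 k,
        ((p : ℝ) / q - (n j : ℝ) / (m j : ℝ) + 1 / q - 1 / (m j : ℝ)) * u j = 0)
      ↔ p = q - 1) :=
  stmt_5_general p q hpq k hk m n e u he hm0 hn0 hm1 hn1 hmrec hnrec hmk hnk hu
end

section
/- Let 0 < p < q be coprime with Hirzebruch-Jung data (m_j, n_j), 0 ≤ j ≤ k+1, where (m_0,n_0) = (0,-1), (m_1,n_1) = (1,0), (m_{k+1}, n_{k+1}) = (q,p), and let 0 = c_{-1} < c_0 < c_1 < ... < c_k, with c_{k+1} := 0 by convention. Define a, b by q·a = Σ_{j=0}^{k+1} (c_j - c_{j-1}) m_j and q·b = Σ_{j=0}^{k+1} (c_j - c_{j-1})(p m_j - q n_j). Then setting u_j = m_j (c_j - c_{j-1}) > 0 for 1 ≤ j ≤ k, one has a + b = Σ_{j=1}^k (p/q - n_j/m_j + 1/q - 1/m_j) u_j. -/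
open Finset

/-!
Split off the boundary terms `j = 0` and `j = k + 1` of both sums. For `1 ≤ j ≤ k` the summand
of `q (a + b)` is `(c j - c (j-1)) (m j + p m j - q n j)`, which is `q` times the claimed summand
plus `q (c j - c (j-1))`. These extra terms telescope to `q (c k - c 0)`, and this cancels against
the boundary terms, which equal `q c 0` and `-q c k` because `(m, n)` is `(0, -1)` at `j = 0` and
`(q, p)` at `j = k + 1`. The divisions by `m j` are harmless since the recurrence with `e j ≥ 2`
makes `m` strictly increasing from `m 0 = 0`.
-/

lemma nonneg_and_lt_succ_of_recurrence {m e : ℕ → ℤ} {k : ℕ} (h0 : 0 ≤ m 0) (h01 : m 0 < m 1)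
    (he : ∀ j, 1 ≤ j → j ≤ k → 2 ≤ e j)
    (hrec : ∀ j, 1 ≤ j → j ≤ k → m (j + 1) = e j * m j - m (j - 1)) :
    ∀ j ≤ k, 0 ≤ m j ∧ m j < m (j + 1) := by
  intro j
  induction j with
  | zero => exact fun _ => ⟨h0, h01⟩
  | succ i ih =>
    intro hi
    obtain ⟨hmi, hlt⟩ := ih (by omega)
    have hei := he (i + 1) (by omega) hi
    have hmsucc := hrec (i + 1) (by omega) hi
    rw [Nat.add_sub_cancel] at hmsucc
    exact ⟨by linarith, by nlinarith⟩

lemma pos_of_recurrence {m e : ℕ → ℤ} {k : ℕ} (h0 : 0 ≤ m 0) (h01 : m 0 < m 1)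
    (he : ∀ j, 1 ≤ j → j ≤ k → 2 ≤ e j)
    (hrec : ∀ j, 1 ≤ j → j ≤ k → m (j + 1) = e j * m j - m (j - 1))
    {j : ℕ} (hj1 : 1 ≤ j) (hjk : j ≤ k + 1) : 0 < m j := by
  obtain ⟨i, rfl⟩ := Nat.exists_eq_add_of_le' hj1
  obtain ⟨hmi, hlt⟩ := nonneg_and_lt_succ_of_recurrence h0 h01 he hrec i (by omega)
  exact hmi.trans_lt hlt

lemma sum_Icc_one_sub_pred {M : Type*} [AddCommGroup M] (c : ℕ → M) (k : ℕ) :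
    ∑ j ∈ Icc 1 k, (c j - c (j - 1)) = c k - c 0 := by
  induction k with
  | zero => simp
  | succ k ih => rw [sum_Icc_succ_top (by omega), ih, Nat.add_sub_cancel]; abel

lemma sum_range_boundary_split {R : Type*} [CommRing R] (c f : ℕ → R) (k : ℕ) :
    ∑ j ∈ range (k + 2),
        (if j = 0 then c 0 else if j = k + 1 then -(c k) else c j - c (j - 1)) * f j =
      c 0 * f 0 + ∑ j ∈ Icc 1 k, (c j - c (j - 1)) * f j - c k * f (k + 1) := by
  rw [sum_range_succ, sum_range_succ', ← Ico_add_one_right_eq_Icc, sum_Ico_eq_sum_range,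
    Nat.add_sub_cancel, if_pos rfl, if_neg (by omega), if_pos rfl]
  have hinterior : ∀ i ∈ range k,
      (if i + 1 = 0 then c 0 else if i + 1 = k + 1 then -(c k) else c (i + 1) - c (i + 1 - 1)) *
          f (i + 1) = (c (1 + i) - c (1 + i - 1)) * f (1 + i) := by
    intro i hi
    rw [mem_range] at hi
    rw [if_neg (by omega), if_neg (by omega), add_comm 1 i]
  rw [sum_congr rfl hinterior]
  ring

lemma mass_summand {K : Type*} [Field K] (p q m n d : K) (hq : q ≠ 0) (hm : m ≠ 0) :
    d * m + d * (p * m - q * n) = q * ((p / q - n / m + 1 / q - 1 / m) * (m * d)) + q * d := by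
  field_simp
  ring

theorem stmt_18_general (p q : ℕ) (hpq : p < q)
    (k : ℕ) (m n e : ℕ → ℤ) (c : ℕ → ℝ) (a b : ℝ)
    (he : ∀ j, 1 ≤ j → j ≤ k → 2 ≤ e j)
    (hm0 : m 0 = 0) (hn0 : n 0 = -1) (hm1 : m 1 = 1)
    (hmrec : ∀ j, 1 ≤ j → j ≤ k → m (j + 1) = e j * m j - m (j - 1))
    (hmk : m (k + 1) = (q : ℤ)) (hnk : n (k + 1) = (p : ℤ))
    (ha : (q : ℝ) * a = ∑ j ∈ range (k + 2),
        (if j = 0 then c 0 else if j = k + 1 then -(c k) else c j - c (j - 1)) * (m j : ℝ))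
    (hb : (q : ℝ) * b = ∑ j ∈ range (k + 2),
        (if j = 0 then c 0 else if j = k + 1 then -(c k) else c j - c (j - 1)) *
          ((p : ℝ) * (m j : ℝ) - (q : ℝ) * (n j : ℝ))) :
    a + b = ∑ j ∈ Icc 1 k,
        ((p : ℝ) / q - (n j : ℝ) / (m j : ℝ) + 1 / q - 1 / (m j : ℝ)) *
          ((m j : ℝ) * (c j - c (j - 1))) := by
  have hq : (q : ℝ) ≠ 0 := by exact_mod_cast (Nat.zero_lt_of_lt hpq).ne'
  have hm : ∀ j ∈ Icc 1 k, (m j : ℝ) ≠ 0 := fun j hj => by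
    rw [mem_Icc] at hj
    exact_mod_cast (pos_of_recurrence (by omega) (by omega) he hmrec hj.1 (by omega)).ne'
  have hinterior : ∑ j ∈ Icc 1 k, (c j - c (j - 1)) * (m j : ℝ) +
        ∑ j ∈ Icc 1 k, (c j - c (j - 1)) * ((p : ℝ) * m j - q * n j) =
      q * ∑ j ∈ Icc 1 k, ((p : ℝ) / q - n j / m j + 1 / q - 1 / m j) * (m j * (c j - c (j - 1))) +
        q * (c k - c 0) := by
    rw [← sum_add_distrib, sum_congr rfl fun j hj => mass_summand _ _ _ _ _ hq (hm j hj),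
      sum_add_distrib, ← mul_sum, ← mul_sum, sum_Icc_one_sub_pred]
  rw [sum_range_boundary_split] at ha hb
  apply mul_left_cancel₀ hq
  simp only [hm0, hn0, hmk, hnk] at ha hb
  push_cast at ha hb
  linear_combination ha + hb + hinterior

/-- The mass-coefficient identity (6.51): with Hirzebruch-Jung data `(m j, n j)`
for coprime `0 < p < q` (so `(m (k+1), n (k+1)) = (q, p)`), parameters
`0 = c₋₁ < c 0 < c 1 < ⋯ < c k` and `c (k+1) = 0` by convention, define `a, b`
by `q·a = ∑_{j=0}^{k+1} (c j - c (j-1)) m j` and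
`q·b = ∑_{j=0}^{k+1} (c j - c (j-1)) (p m j - q n j)`. Then with
`u j = m j (c j - c (j-1)) > 0`,
`a + b = ∑_{j=1}^k (p/q - n j/m j + 1/q - 1/m j) u j`. -/
theorem stmt_18 (p q : ℕ) (hp : 0 < p) (hpq : p < q) (hcop : Nat.Coprime p q)
    (k : ℕ) (hk : 1 ≤ k) (m n e : ℕ → ℤ) (c : ℕ → ℝ) (a b : ℝ)
    (he : ∀ j, 1 ≤ j → j ≤ k → 2 ≤ e j)
    (hm0 : m 0 = 0) (hn0 : n 0 = -1) (hm1 : m 1 = 1) (hn1 : n 1 = 0)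
    (hmrec : ∀ j, 1 ≤ j → j ≤ k → m (j + 1) = e j * m j - m (j - 1))
    (hnrec : ∀ j, 1 ≤ j → j ≤ k → n (j + 1) = e j * n j - n (j - 1))
    (hmk : m (k + 1) = (q : ℤ)) (hnk : n (k + 1) = (p : ℤ))
    (hc0 : 0 < c 0) (hcmono : ∀ j, j < k → c j < c (j + 1))
    (ha : (q : ℝ) * a = ∑ j ∈ range (k + 2),
        (if j = 0 then c 0 else if j = k + 1 then -(c k) else c j - c (j - 1)) * (m j : ℝ))
    (hb : (q : ℝ) * b = ∑ j ∈ range (k + 2),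
        (if j = 0 then c 0 else if j = k + 1 then -(c k) else c j - c (j - 1)) *
          ((p : ℝ) * (m j : ℝ) - (q : ℝ) * (n j : ℝ))) :
    a + b = ∑ j ∈ Icc 1 k,
        ((p : ℝ) / q - (n j : ℝ) / (m j : ℝ) + 1 / q - 1 / (m j : ℝ)) *
          ((m j : ℝ) * (c j - c (j - 1))) :=
  stmt_18_general p q hpq k m n e c a b he hm0 hn0 hm1 hmrec hmk hnk ha hb
end
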